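/- In the tiling of ℝ where (−∞,0] is tiled by unit intervals, and [0,∞) is partitioned by the points a_n = 2^{2^n} − 2 into blocks [a_{2n}, a_{2n+1}] tiled by length-2 intervals and [a_{2n−1}, a_{2n}] tiled by unit intervals, one has d̲₂(1) = 1 < d̄₂(1) = 2. -/

import Mathlib

noncomputable def a14 : ℕ → ℝ := fun n => 2 ^ (2 ^ n) - 2

/-- The set of endpoints of the tiles of the tiling of `ℝ` in which `(−∞,0]` is tiled
by unit intervals, `[a (2n), a (2n+1)]` is tiled by length-2 intervals, and
`[a (2n+1), a (2n+2)]` is tiled by unit intervals. -/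
def E14 : Set ℝ :=
  {x | (∃ k : ℕ, x = -(k : ℝ)) ∨
       (∃ n k : ℕ, x = a14 (2 * n) + 2 * k ∧ x ≤ a14 (2 * n + 1)) ∨
       (∃ n k : ℕ, x = a14 (2 * n + 1) + k ∧ x ≤ a14 (2 * n + 2))}

/-- The combinatorial patch distance: `n14 x y + 1` is the minimal number of
consecutive tiles covering an interval containing both `x` and `y`, which equals one
plus the number of tile endpoints strictly between `x` and `y`. -/
noncomputable def n14 (x y : ℝ) : ℕ := (E14 ∩ Set.Ioo (min x y) (max x y)).ncard

/-! Every tile endpoint is an integer and every even integer is a tile endpoint, so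
`t / 2 - 1 ≤ n(x, x + t) ≤ t + 1`; this already gives `1 ≤ liminf` and `limsup ≤ 2` at every
`x`.
Since `a (n + 1) ≥ a n ^ 2`, each block dwarfs everything to its left. So when `x + t` is the
right end `a (2k+1)` of a block of length-2 tiles, almost all of `[x, x + t]` is covered by
length-2 tiles and `t / n(x, x + t) → 2`; when `x + t` is the right end `a (2k+2)` of a block of
unit tiles, `t / n(x, x + t) → 1`. -/

open Filter Set Asymptotics AddSubgroup Topology

section Counting

variable {a b c : ℝ}

theorem zmultiples_inter_Ioo_eq_image (hc : 0 < c) :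
    (zmultiples c : Set ℝ) ∩ Ioo a b = (· • c) '' Ioo ⌊a / c⌋ ⌈b / c⌉ := by
  ext y
  simp only [mem_inter_iff, SetLike.mem_coe, mem_zmultiples_iff, mem_Ioo, mem_image,
    Int.floor_lt, Int.lt_ceil, div_lt_iff₀ hc, lt_div_iff₀ hc, zsmul_eq_mul]
  constructor
  · rintro ⟨⟨k, rfl⟩, hak, hkb⟩
    exact ⟨k, ⟨hak, hkb⟩, rfl⟩
  · rintro ⟨k, ⟨hak, hkb⟩, rfl⟩
    exact ⟨⟨k, rfl⟩, hak, hkb⟩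

theorem finite_zmultiples_inter_Ioo (hc : 0 < c) :
    ((zmultiples c : Set ℝ) ∩ Ioo a b).Finite := by
  rw [zmultiples_inter_Ioo_eq_image hc]
  exact (finite_Ioo _ _).image _

theorem ncard_zmultiples_inter_Ioo (hc : 0 < c) :
    ((zmultiples c : Set ℝ) ∩ Ioo a b).ncard = (⌈b / c⌉ - ⌊a / c⌋ - 1).toNat := by
  rw [zmultiples_inter_Ioo_eq_image hc,
    ncard_image_of_injective _ (zsmul_left_strictMono hc).injective, ← Finset.coe_Ioo,
    ncard_coe_finset, Int.card_Ioo]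

theorem ncard_inter_Ioo_le_of_subset_zmultiples {S : Set ℝ} (hc : 0 < c)
    (hS : S ⊆ zmultiples c) (hab : a ≤ b) : ((S ∩ Ioo a b).ncard : ℝ) ≤ (b - a) / c + 1 := by
  have hcount : ((S ∩ Ioo a b).ncard : ℝ) ≤ ((⌈b / c⌉ - ⌊a / c⌋ - 1).toNat : ℤ) := by
    rw [← ncard_zmultiples_inter_Ioo hc]
    exact_mod_cast ncard_le_ncard (inter_subset_inter_left _ hS)
      (finite_zmultiples_inter_Ioo hc)
  have hceil := Int.ceil_lt_add_one (b / c)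
  have hfloor := Int.sub_one_lt_floor (a / c)
  have hba : 0 ≤ (b - a) / c := div_nonneg (sub_nonneg.2 hab) hc.le
  rw [Int.toNat_eq_max] at hcount
  push_cast at hcount
  rw [sub_div] at hba ⊢
  refine hcount.trans (max_le ?_ ?_) <;> linarith

theorem le_ncard_inter_Ioo_of_zmultiples_subset {S : Set ℝ} (hc : 0 < c)
    (hS : (zmultiples c : Set ℝ) ∩ Ioo a b ⊆ S) (hfin : (S ∩ Ioo a b).Finite) :
    (b - a) / c - 1 ≤ (S ∩ Ioo a b).ncard := by
  have hcount : ((⌈b / c⌉ - ⌊a / c⌋ - 1).toNat : ℝ) ≤ (S ∩ Ioo a b).ncard := by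
    rw [← ncard_zmultiples_inter_Ioo hc]
    exact_mod_cast ncard_le_ncard (subset_inter hS inter_subset_right) hfin
  have hceil := Int.le_ceil (b / c)
  have hfloor := Int.floor_le (a / c)
  have htoNat : ((⌈b / c⌉ - ⌊a / c⌋ - 1 : ℤ) : ℝ) ≤ (⌈b / c⌉ - ⌊a / c⌋ - 1).toNat := by
    exact_mod_cast Int.self_le_toNat _
  push_cast at htoNat
  rw [sub_div]
  linarith

end Counting

theorem exists_le_and_lt_succ {α : Type*} [LinearOrder α] {f : ℕ → α} {y : α} (h0 : f 0 ≤ y)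
    (hy : ∃ n, y < f n) : ∃ n, f n ≤ y ∧ y < f (n + 1) := by
  by_contra! H
  obtain ⟨n, hn⟩ := hy
  exact hn.not_ge (Nat.rec h0 H n)

theorem exists_nat_eq_add_of_le {r : ℝ} {m : ℤ} (hr : ∃ b : ℤ, r = b) (h : r ≤ m) :
    ∃ k : ℕ, (m : ℝ) = r + k := by
  obtain ⟨b, rfl⟩ := hr
  obtain ⟨k, hk⟩ := Int.eq_ofNat_of_zero_le (sub_nonneg.2 (Int.cast_le.1 h))
  exact ⟨k, by rw [← Int.cast_natCast, ← hk]; push_cast; ring⟩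

theorem tendsto_two_mul_add_atTop (c : ℕ) : Tendsto (fun k : ℕ => 2 * k + c) atTop atTop :=
  tendsto_atTop_mono (fun k => by rw [id]; omega) tendsto_id

theorem tendsto_add_div_mul_add {β : Type*} {l : Filter β} {u v : β → ℝ} {c α : ℝ} (hα : α ≠ 0)
    (hu : Tendsto u l atTop) (hv : v =o[l] u) :
    Tendsto (fun k => (u k + c) / (α * u k + v k)) l (𝓝 α⁻¹) := by
  have hlim :=
    (tendsto_const_nhds (x := (1 : ℝ)).add (tendsto_const_nhds (x := c).div_atTop hu)).div
      (tendsto_const_nhds.add hv.tendsto_div_nhds_zero) (by rwa [add_zero])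
  rw [add_zero, add_zero, one_div] at hlim
  refine hlim.congr' ?_
  filter_upwards [hu.eventually_ne_atTop 0] with k hk
  rw [Pi.div_apply]
  field_simp

theorem isLittleO_const_of_tendsto_atTop {β : Type*} {l : Filter β} {u : β → ℝ}
    (hu : Tendsto u l atTop) (c : ℝ) : (fun _ => c) =o[l] u :=
  isLittleO_const_left.2 (Or.inr (tendsto_norm_atTop_atTop.comp hu))

theorem tendsto_div_add_one_atTop : Tendsto (fun t : ℝ => t / (t + 1)) atTop (𝓝 1) := by
  simpa using tendsto_add_div_mul_add (c := 0) one_ne_zero tendsto_id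
    (isLittleO_const_of_tendsto_atTop tendsto_id 1)

theorem tendsto_div_div_two_sub_one_atTop :
    Tendsto (fun t : ℝ => t / (t / 2 - 1)) atTop (𝓝 2) := by
  have := tendsto_add_div_mul_add (c := 0) (inv_ne_zero two_ne_zero) tendsto_id
    (isLittleO_const_of_tendsto_atTop tendsto_id (-1))
  simp only [id, add_zero, inv_inv] at this
  refine this.congr fun t => ?_
  ring

section LimsupLiminf
variable {α β : Type*} {F : Filter α} {G : Filter β} [G.NeBot] {f : α → ℝ} {g : β → ℝ}
  {s : β → α} {L : ℝ}

theorem limsup_eq_of_le_of_tendsto_comp {u : α → ℝ} (hf : IsBoundedUnder (· ≥ ·) F f)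
    (hfu : f ≤ᶠ[F] u) (hu : Tendsto u F (𝓝 L)) (hs : Tendsto s G F)
    (hgf : ∀ᶠ k in G, g k ≤ f (s k)) (hg : Tendsto g G (𝓝 L)) : limsup f F = L := by
  have := hs.neBot
  have hfs : Tendsto (f ∘ s) G (𝓝 L) :=
    tendsto_of_tendsto_of_tendsto_of_le_of_le' hg (hu.comp hs) hgf (hs.eventually hfu)
  refine le_antisymm ?_ ?_
  · calc limsup f F ≤ limsup u F :=
          limsup_le_limsup hfu hf.isCoboundedUnder_le hu.isBoundedUnder_le
      _ = L := hu.limsup_eq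
  · calc L = limsup f (map s G) := hfs.limsup_eq.symm
      _ ≤ limsup f F := limsup_le_limsup_of_le hs hfs.isBoundedUnder_ge.isCoboundedUnder_le
          (hu.isBoundedUnder_le.mono_le hfu)

theorem liminf_eq_of_le_of_tendsto_comp {l : α → ℝ} (hf : IsBoundedUnder (· ≤ ·) F f)
    (hlf : l ≤ᶠ[F] f) (hl : Tendsto l F (𝓝 L)) (hs : Tendsto s G F)
    (hfg : ∀ᶠ k in G, f (s k) ≤ g k) (hg : Tendsto g G (𝓝 L)) : liminf f F = L := by
  have := hs.neBot
  have hfs : Tendsto (f ∘ s) G (𝓝 L) :=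
    tendsto_of_tendsto_of_tendsto_of_le_of_le' (hl.comp hs) hg (hs.eventually hlf) hfg
  refine le_antisymm ?_ ?_
  · calc liminf f F ≤ liminf f (map s G) := liminf_le_liminf_of_le hs
          (hl.isBoundedUnder_ge.mono_ge hlf) hfs.isBoundedUnder_le.isCoboundedUnder_ge
      _ = L := hfs.liminf_eq
  · calc L = liminf l F := hl.liminf_eq.symm
      _ ≤ liminf f F := liminf_le_liminf hlf hl.isBoundedUnder_ge hf.isCoboundedUnder_ge

end LimsupLiminf

theorem a14_succ (n : ℕ) : a14 (n + 1) = a14 n ^ 2 + 4 * a14 n + 2 := by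
  simp only [a14, pow_succ 2 n, pow_mul]
  ring

theorem a14_nonneg (n : ℕ) : 0 ≤ a14 n := by
  have : (2 : ℝ) ≤ 2 ^ 2 ^ n := le_self_pow₀ one_le_two (pow_ne_zero n two_ne_zero)
  simp only [a14]
  linarith

theorem a14_strictMono : StrictMono a14 :=
  strictMono_nat_of_lt_succ fun n => by nlinarith [a14_succ n, a14_nonneg n]

theorem natCast_le_a14 (n : ℕ) : (n : ℝ) ≤ a14 n := by
  induction n with
  | zero => simp [a14]
  | succ n ih => push_cast; nlinarith [a14_succ n, a14_nonneg n]

theorem tendsto_a14_atTop : Tendsto a14 atTop atTop :=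
  tendsto_atTop_mono natCast_le_a14 tendsto_natCast_atTop_atTop

theorem exists_a14_eq_two_mul (n : ℕ) : ∃ b : ℤ, a14 n = 2 * b := by
  obtain ⟨m, hm⟩ : ∃ m, 2 ^ n = m + 1 :=
    ⟨2 ^ n - 1, (Nat.sub_add_cancel Nat.one_le_two_pow).symm⟩
  refine ⟨2 ^ m - 1, ?_⟩
  simp only [a14, hm, pow_succ]
  push_cast
  ring

theorem a14_isLittleO_succ : a14 =o[atTop] fun n => a14 (n + 1) := by
  have hsq : a14 =o[atTop] fun n => a14 n ^ 2 := by
    simpa [Function.comp_def] using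
      (isLittleO_pow_pow_atTop_of_lt (𝕜 := ℝ) one_lt_two).comp_tendsto tendsto_a14_atTop
  refine hsq.trans_isBigO (isBigO_of_le _ fun n => ?_)
  have := a14_nonneg n
  rw [Real.norm_of_nonneg (by positivity), Real.norm_of_nonneg (a14_nonneg _), a14_succ]
  nlinarith

theorem E14_subset_zmultiples_one : E14 ⊆ zmultiples (1 : ℝ) := by
  rintro y (⟨k, rfl⟩ | ⟨n, k, rfl, -⟩ | ⟨n, k, rfl, -⟩) <;>
    rw [SetLike.mem_coe, mem_zmultiples_iff]
  · exact ⟨-k, by simp⟩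
  · obtain ⟨b, hb⟩ := exists_a14_eq_two_mul (2 * n)
    exact ⟨2 * b + 2 * k, by rw [hb]; simp⟩
  · obtain ⟨b, hb⟩ := exists_a14_eq_two_mul (2 * n + 1)
    exact ⟨2 * b + k, by rw [hb]; simp⟩

theorem zmultiples_one_inter_Icc_subset_E14 (n : ℕ) :
    (zmultiples (1 : ℝ) : Set ℝ) ∩ Icc (a14 (2 * n + 1)) (a14 (2 * n + 2)) ⊆ E14 := by
  rintro _ ⟨hy, hlo, hhi⟩
  obtain ⟨m, rfl⟩ := mem_zmultiples_iff.1 hy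
  obtain ⟨b, hb⟩ := exists_a14_eq_two_mul (2 * n + 1)
  rw [zsmul_one] at hlo hhi ⊢
  obtain ⟨k, hk⟩ := exists_nat_eq_add_of_le ⟨2 * b, by rw [hb]; push_cast; ring⟩ hlo
  exact Or.inr (Or.inr ⟨n, k, hk, hhi⟩)

theorem zmultiples_two_subset_E14 : (zmultiples (2 : ℝ) : Set ℝ) ⊆ E14 := by
  intro y hy
  obtain ⟨m, rfl⟩ := mem_zmultiples_iff.1 hy
  rw [zsmul_eq_mul]
  rcases le_or_gt m 0 with hm | hm
  · obtain ⟨k, hk⟩ :=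
      exists_nat_eq_add_of_le (r := m * 2) (m := 0) ⟨m * 2, by push_cast; ring⟩
      (by rw [Int.cast_zero]; linarith [(Int.cast_nonpos.2 hm : (m : ℝ) ≤ 0)])
    exact Or.inl ⟨k, by rw [Int.cast_zero] at hk; linarith⟩
  have hm' : (0 : ℝ) < m := Int.cast_pos.2 hm
  obtain ⟨j, hj, hj'⟩ := exists_le_and_lt_succ (f := a14) (y := m * 2)
    (by simp [a14]; positivity) (tendsto_a14_atTop.eventually_gt_atTop _).exists
  rcases Nat.even_or_odd' j with ⟨n, rfl | rfl⟩
  · obtain ⟨b, hb⟩ := exists_a14_eq_two_mul (2 * n)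
    obtain ⟨k, hk⟩ := exists_nat_eq_add_of_le (m := m) ⟨b, rfl⟩ (by linarith)
    exact Or.inr (Or.inl ⟨n, k, by rw [hb, hk]; ring, hj'.le⟩)
  · exact zmultiples_one_inter_Icc_subset_E14 n
      ⟨mem_zmultiples_iff.2 ⟨m * 2, by simp⟩, hj, hj'.le⟩

theorem E14_inter_Ioo_subset_zmultiples_two (k : ℕ) :
    E14 ∩ Ioo (a14 (2 * k)) (a14 (2 * k + 1)) ⊆ zmultiples (2 : ℝ) := by
  rintro _ ⟨(⟨i, rfl⟩ | ⟨n, i, rfl, -⟩ | ⟨n, i, rfl, hle⟩), hlo, hhi⟩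
  · linarith [a14_nonneg (2 * k), (Nat.cast_nonneg i : (0 : ℝ) ≤ i)]
  · obtain ⟨b, hb⟩ := exists_a14_eq_two_mul (2 * n)
    exact mem_zmultiples_iff.2 ⟨b + i, by rw [hb]; simp; ring⟩
  · have h1 : a14 (2 * k) < a14 (2 * n + 2) := hlo.trans_le hle
    have h2 : a14 (2 * n + 1) < a14 (2 * k + 1) := by
      linarith [(Nat.cast_nonneg i : (0 : ℝ) ≤ i)]
    rw [a14_strictMono.lt_iff_lt] at h1 h2
    omega

section PatchDistance
variable {x y : ℝ}

theorem n14_eq_ncard (h : x ≤ y) : n14 x y = (E14 ∩ Ioo x y).ncard := by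
  rw [n14, min_eq_left h, max_eq_right h]

theorem finite_E14_inter_Ioo (a b : ℝ) : (E14 ∩ Ioo a b).Finite :=
  (finite_zmultiples_inter_Ioo one_pos).subset
    (inter_subset_inter_left _ E14_subset_zmultiples_one)

theorem n14_le_sub_add_one (h : x ≤ y) : (n14 x y : ℝ) ≤ y - x + 1 := by
  rw [n14_eq_ncard h]
  simpa using ncard_inter_Ioo_le_of_subset_zmultiples one_pos E14_subset_zmultiples_one h

theorem sub_div_two_sub_one_le_n14 (h : x ≤ y) : (y - x) / 2 - 1 ≤ n14 x y := by
  rw [n14_eq_ncard h]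
  exact le_ncard_inter_Ioo_of_zmultiples_subset two_pos
    (inter_subset_left.trans zmultiples_two_subset_E14) (finite_E14_inter_Ioo _ _)

theorem n14_a14_odd_le {k : ℕ} (hx : x < a14 (2 * k)) :
    (n14 x (a14 (2 * k + 1)) : ℝ) ≤ (a14 (2 * k + 1) + a14 (2 * k)) / 2 - x + 3 := by
  set A₀ := a14 (2 * k)
  set A₁ := a14 (2 * k + 1)
  have hA : A₀ < A₁ := a14_strictMono (by omega)
  have hsplit : E14 ∩ Ioo x A₁ ⊆ (E14 ∩ Ioo x (A₀ + 1)) ∪ (E14 ∩ Ioo A₀ A₁) := by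
    rintro y ⟨hy, hxy, hyA⟩
    by_cases h : y < A₀ + 1
    · exact Or.inl ⟨hy, hxy, h⟩
    · exact Or.inr ⟨hy, by linarith, hyA⟩
  have hcard := (ncard_le_ncard hsplit
    ((finite_E14_inter_Ioo _ _).union (finite_E14_inter_Ioo _ _))).trans (ncard_union_le _ _)
  have hunit := n14_le_sub_add_one (x := x) (y := A₀ + 1) (by linarith)
  have hdouble := ncard_inter_Ioo_le_of_subset_zmultiples two_pos
    (E14_inter_Ioo_subset_zmultiples_two k) hA.le
  rw [inter_assoc, inter_self] at hdouble
  rw [n14_eq_ncard (by linarith)] at hunit ⊢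
  have : ((E14 ∩ Ioo x A₁).ncard : ℝ) ≤
      (E14 ∩ Ioo x (A₀ + 1)).ncard + (E14 ∩ Ioo A₀ A₁).ncard := by
    exact_mod_cast hcard
  linarith

theorem a14_sub_a14_sub_one_le_n14 {k : ℕ} (hx : x ≤ a14 (2 * k + 1)) :
    a14 (2 * k + 2) - a14 (2 * k + 1) - 1 ≤ n14 x (a14 (2 * k + 2)) := by
  have hA : a14 (2 * k + 1) < a14 (2 * k + 2) := a14_strictMono (by omega)
  have hunit := le_ncard_inter_Ioo_of_zmultiples_subset one_pos
    ((inter_subset_inter_right _ Ioo_subset_Icc_self).trans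
      (zmultiples_one_inter_Icc_subset_E14 k))
    (finite_E14_inter_Ioo _ _)
  have hmono :
      (E14 ∩ Ioo (a14 (2 * k + 1)) (a14 (2 * k + 2))).ncard ≤ n14 x (a14 (2 * k + 2)) := by
    rw [n14_eq_ncard (hx.trans hA.le)]
    exact ncard_le_ncard (inter_subset_inter_right _ (Ioo_subset_Ioo_left hx))
      (finite_E14_inter_Ioo _ _)
  rw [div_one] at hunit
  exact hunit.trans (by exact_mod_cast hmono)

end PatchDistance

section Ratio
variable (x : ℝ)

theorem eventually_div_n14_le : ∀ᶠ t in atTop, t / n14 x (x + t) ≤ t / (t / 2 - 1) := by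
  filter_upwards [eventually_gt_atTop 2] with t ht
  have hn := sub_div_two_sub_one_le_n14 (x := x) (y := x + t) (by linarith)
  rw [add_sub_cancel_left] at hn
  exact div_le_div_of_nonneg_left (by linarith) (by linarith) hn

theorem eventually_le_div_n14 : ∀ᶠ t in atTop, t / (t + 1) ≤ t / n14 x (x + t) := by
  filter_upwards [eventually_gt_atTop 2] with t ht
  have hn := sub_div_two_sub_one_le_n14 (x := x) (y := x + t) (by linarith)
  have hn' := n14_le_sub_add_one (x := x) (y := x + t) (by linarith)
  rw [add_sub_cancel_left] at hn hn'
  exact div_le_div_of_nonneg_left (by linarith) (by linarith) hn'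

theorem limsup_div_n14 : limsup (fun t => t / n14 x (x + t)) atTop = 2 := by
  have hs : Tendsto (fun k => a14 (2 * k + 1) - x) atTop atTop :=
    tendsto_atTop_add_const_right _ _ (tendsto_a14_atTop.comp (tendsto_two_mul_add_atTop 1))
  have hv : (fun k => 2⁻¹ * a14 (2 * k) + (3 - x)) =o[atTop] fun k => a14 (2 * k + 1) :=
    ((a14_isLittleO_succ.comp_tendsto (tendsto_two_mul_add_atTop 0)).const_mul_left _).add
      (isLittleO_const_of_tendsto_atTop (tendsto_a14_atTop.comp (tendsto_two_mul_add_atTop 1)) _)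
  have hg := tendsto_add_div_mul_add (c := -x) (inv_ne_zero two_ne_zero)
    (tendsto_a14_atTop.comp (tendsto_two_mul_add_atTop 1)) hv
  rw [inv_inv] at hg
  refine limsup_eq_of_le_of_tendsto_comp (isBoundedUnder_of_eventually_ge (a := 0) ?_)
    (eventually_div_n14_le x) tendsto_div_div_two_sub_one_atTop hs ?_ hg
  · filter_upwards [eventually_ge_atTop 0] with t ht
    positivity
  filter_upwards [(tendsto_a14_atTop.comp (tendsto_two_mul_add_atTop 0)).eventually_gt_atTop x,
    hs.eventually_gt_atTop 2] with k hx ht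
  have hn := sub_div_two_sub_one_le_n14 (x := x) (y := a14 (2 * k + 1)) (by linarith)
  simp only [Function.comp, add_sub_cancel] at hx ⊢
  refine div_le_div_of_nonneg_left (by linarith) (by linarith) ?_
  linarith [n14_a14_odd_le (k := k) hx]

theorem liminf_div_n14 : liminf (fun t => t / n14 x (x + t)) atTop = 1 := by
  have hs : Tendsto (fun k => a14 (2 * k + 2) - x) atTop atTop :=
    tendsto_atTop_add_const_right _ _ (tendsto_a14_atTop.comp (tendsto_two_mul_add_atTop 2))
  have hv : (fun k => -a14 (2 * k + 1) + -1) =o[atTop] fun k => a14 (2 * k + 2) :=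
    (a14_isLittleO_succ.comp_tendsto (tendsto_two_mul_add_atTop 1)).neg_left.add
      (isLittleO_const_of_tendsto_atTop (tendsto_a14_atTop.comp (tendsto_two_mul_add_atTop 2)) _)
  have hg := tendsto_add_div_mul_add (c := -x) one_ne_zero
    (tendsto_a14_atTop.comp (tendsto_two_mul_add_atTop 2)) hv
  rw [inv_one] at hg
  refine liminf_eq_of_le_of_tendsto_comp
    (tendsto_div_div_two_sub_one_atTop.isBoundedUnder_le.mono_le (eventually_div_n14_le x))
    (eventually_le_div_n14 x) tendsto_div_add_one_atTop hs ?_ hg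
  filter_upwards [(tendsto_a14_atTop.comp (tendsto_two_mul_add_atTop 1)).eventually_ge_atTop x]
    with k hx
  simp only [Function.comp, add_sub_cancel] at hx ⊢
  have hgap : a14 (2 * k + 1) + 1 < a14 (2 * k + 2) := by
    nlinarith [a14_succ (2 * k + 1), a14_nonneg (2 * k + 1)]
  refine div_le_div_of_nonneg_left (by linarith) (by linarith) ?_
  linarith [a14_sub_a14_sub_one_le_n14 (k := k) hx]

end Ratio

/-- for this tiling, `d̲₂(1) = 1 < d̄₂(1) = 2`. -/
theorem stmt_14 :
    (⨅ x : ℝ, Filter.liminf (fun t : ℝ => t / (n14 x (x + t) : ℝ)) Filter.atTop) = 1 ∧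
    (⨆ x : ℝ, Filter.limsup (fun t : ℝ => t / (n14 x (x + t) : ℝ)) Filter.atTop) = 2 := by
  simp only [liminf_div_n14, limsup_div_n14, ciInf_const, ciSup_const, and_self]
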